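/- arXiv:2111.14761 — 5 statements merged into one kernel-verified Lean document; each statement's English description precedes it below -/
import Mathlib

section
/- Let f : ℝⁿ → ℝ be continuously differentiable with L-Lipschitz gradient, let σ > 0, let g be an inexact gradient at x satisfying ‖g − ∇f(x)‖ ≤ ω‖g‖ with 0 < ω ≤ 1/σ, and let s = −(1/σ)g. Then |f(x+s) − (f(x) + ∇f(x)ᵀs)| ≤ (L/2)‖s‖², and the ratio ρ = (f(x) − f(x+s)) / ((1/σ)‖g‖²) satisfies |ρ − 1| ≤ (L/2 + 1)/σ. -/
/-!
The first bound is the descent lemma for an `L`-Lipschitz gradient. For the ratio, the actual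
decrease minus the model decrease `(1/σ)‖g‖²` is the negated Taylor error, at most
`(L/2)‖s‖² = (L/(2σ²))‖g‖²`, plus `(1/σ)(⟪∇f(x), g⟫ - ‖g‖²)`, at most `(ω/σ)‖g‖²` by
Cauchy–Schwarz. Dividing by the model decrease gives `|ρ - 1| ≤ L/(2σ) + ω ≤ (L/2 + 1)/σ`.
-/

open scoped RealInnerProductSpace NNReal

section Descent

variable {F : Type*} [NormedAddCommGroup F] [InnerProductSpace ℝ F] [CompleteSpace F]

theorem hasDerivAt_comp_add_smul_of_hasGradientAt {f : F → ℝ} {f' : F → F}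
    (hf' : ∀ y, HasGradientAt f (f' y) y) (x s : F) (t : ℝ) :
    HasDerivAt (fun t : ℝ => f (x + t • s)) ⟪f' (x + t • s), s⟫ t := by
  have hline : HasDerivAt (fun t : ℝ => x + t • s) s t := by
    simpa using ((hasDerivAt_id t).smul_const s).const_add x
  have hcomp := (hf' (x + t • s)).hasFDerivAt.comp_hasDerivAt t hline
  simp only [Function.comp_def, InnerProductSpace.toDual_apply_apply] at hcomp
  exact hcomp

theorem abs_sub_inner_gradient_le_of_lipschitzWith {f : F → ℝ} {f' : F → F} {K : ℝ≥0}
    (hf' : ∀ y, HasGradientAt f (f' y) y) (hLip : LipschitzWith K f') (x s : F) :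
    |f (x + s) - (f x + ⟪f' x, s⟫)| ≤ K / 2 * ‖s‖ ^ 2 := by
  -- Fence `φ t = f (x + t • s) - f x - t ⟪f' x, s⟫` by `K ‖s‖² t² / 2`, whose derivative
  -- `K ‖s‖² t` dominates `|φ' t| = |⟪f' (x + t • s) - f' x, s⟫|`.
  set φ : ℝ → ℝ := fun t => f (x + t • s) - (f x + t * ⟪f' x, s⟫)
  have hφ : ∀ t, HasDerivAt φ (⟪f' (x + t • s) - f' x, s⟫) t := by
    intro t
    have := (hasDerivAt_comp_add_smul_of_hasGradientAt hf' x s t).sub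
      (((hasDerivAt_id t).mul_const ⟪f' x, s⟫).const_add (f x))
    rw [inner_sub_left]
    simp only [id, one_mul] at this
    exact this
  have hB : ∀ t : ℝ, HasDerivAt (fun t => K / 2 * ‖s‖ ^ 2 * t ^ 2) (K * ‖s‖ ^ 2 * t) t := by
    intro t
    refine ((hasDerivAt_pow 2 t).const_mul (K / 2 * ‖s‖ ^ 2)).congr_deriv ?_
    push_cast
    ring
  have hbound : ∀ t ∈ Set.Ico (0 : ℝ) 1, ‖⟪f' (x + t • s) - f' x, s⟫‖ ≤ K * ‖s‖ ^ 2 * t := by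
    rintro t ⟨ht, -⟩
    have hgrad : ‖f' (x + t • s) - f' x‖ ≤ K * (t * ‖s‖) := by
      simpa [← dist_eq_norm, norm_smul, abs_of_nonneg ht] using hLip.dist_le_mul (x + t • s) x
    calc ‖⟪f' (x + t • s) - f' x, s⟫‖ ≤ ‖f' (x + t • s) - f' x‖ * ‖s‖ := norm_inner_le_norm _ _
      _ ≤ K * (t * ‖s‖) * ‖s‖ := by gcongr
      _ = K * ‖s‖ ^ 2 * t := by ring
  have hfence := image_norm_le_of_norm_deriv_right_le_deriv_boundary
    (fun t _ => (hφ t).continuousAt.continuousWithinAt) (fun t _ => (hφ t).hasDerivWithinAt)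
    (by simp [φ]) hB hbound (Set.right_mem_Icc.2 zero_le_one)
  simpa [φ] using hfence

end Descent

section InexactGradient

variable {F : Type*} [NormedAddCommGroup F] [InnerProductSpace ℝ F]

theorem abs_inner_sub_norm_sq_le_of_norm_sub_le {v g : F} {ω : ℝ} (herr : ‖g - v‖ ≤ ω * ‖g‖) :
    |⟪v, g⟫ - ‖g‖ ^ 2| ≤ ω * ‖g‖ ^ 2 := by
  calc |⟪v, g⟫ - ‖g‖ ^ 2| = |⟪g - v, g⟫| := by
        rw [inner_sub_left, real_inner_self_eq_norm_sq, abs_sub_comm]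
    _ ≤ ‖g - v‖ * ‖g‖ := abs_real_inner_le_norm _ _
    _ ≤ ω * ‖g‖ * ‖g‖ := by gcongr
    _ = ω * ‖g‖ ^ 2 := by ring

theorem abs_decrease_ratio_sub_one_le (f : F → ℝ) {x g v : F} {L σ ω : ℝ} (hσ : 0 < σ)
    (hg : g ≠ 0) (herr : ‖g - v‖ ≤ ω * ‖g‖)
    (hmodel : |f (x + -(1 / σ) • g) - (f x + ⟪v, -(1 / σ) • g⟫)| ≤ L / 2 * ‖-(1 / σ) • g‖ ^ 2) :
    |(f x - f (x + -(1 / σ) • g)) / ((1 / σ) * ‖g‖ ^ 2) - 1| ≤ L / (2 * σ) + ω := by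
  set s := -(1 / σ) • g
  set E := f (x + s) - (f x + ⟪v, s⟫)
  have hD : 0 < (1 / σ) * ‖g‖ ^ 2 := by positivity
  have hs : ‖s‖ = 1 / σ * ‖g‖ := by
    rw [norm_smul, norm_neg, Real.norm_of_nonneg (by positivity)]
  have hdecrease : f x - f (x + s) - (1 / σ) * ‖g‖ ^ 2 = -E + (1 / σ) * (⟪v, g⟫ - ‖g‖ ^ 2) := by
    simp only [E, s, inner_smul_right]
    ring
  have hinner := abs_inner_sub_norm_sq_le_of_norm_sub_le herr
  rw [div_sub_one hD.ne', abs_div, abs_of_pos hD, div_le_iff₀ hD, hdecrease]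
  calc |-E + (1 / σ) * (⟪v, g⟫ - ‖g‖ ^ 2)|
      ≤ |E| + (1 / σ) * |⟪v, g⟫ - ‖g‖ ^ 2| := by
        grw [abs_add_le, abs_neg, abs_mul, abs_of_pos (one_div_pos.2 hσ)]
    _ ≤ L / 2 * (1 / σ * ‖g‖) ^ 2 + (1 / σ) * (ω * ‖g‖ ^ 2) := by
        rw [← hs]; gcongr
    _ = (L / (2 * σ) + ω) * ((1 / σ) * ‖g‖ ^ 2) := by
        field_simp

end InexactGradient

theorem stmt_0_general {n : ℕ} (f : EuclideanSpace ℝ (Fin n) → ℝ)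
    (f' : EuclideanSpace ℝ (Fin n) → EuclideanSpace ℝ (Fin n))
    (L σ ω : ℝ) (x g s : EuclideanSpace ℝ (Fin n))
    (hf' : ∀ y, HasGradientAt f (f' y) y)
    (hL : 0 < L)
    (hLip : LipschitzWith (Real.toNNReal L) f')
    (hσ : 0 < σ) (hωσ : ω ≤ 1 / σ)
    (hg : g ≠ 0)
    (herr : ‖g - f' x‖ ≤ ω * ‖g‖)
    (hs : s = -(1 / σ) • g) :
    |f (x + s) - (f x + ⟪f' x, s⟫)| ≤ L / 2 * ‖s‖ ^ 2 ∧
      |(f x - f (x + s)) / ((1 / σ) * ‖g‖ ^ 2) - 1| ≤ (L / 2 + 1) / σ := by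
  have hmodel := abs_sub_inner_gradient_le_of_lipschitzWith hf' hLip x s
  rw [Real.coe_toNNReal L hL.le] at hmodel
  refine ⟨hmodel, ?_⟩
  subst hs
  calc _ ≤ L / (2 * σ) + ω := abs_decrease_ratio_sub_one_le f hσ hg herr hmodel
    _ ≤ L / (2 * σ) + 1 / σ := by gcongr
    _ = (L / 2 + 1) / σ := by field_simp

theorem stmt_0 {n : ℕ} (f : EuclideanSpace ℝ (Fin n) → ℝ)
    (f' : EuclideanSpace ℝ (Fin n) → EuclideanSpace ℝ (Fin n))
    (L σ ω : ℝ) (x g s : EuclideanSpace ℝ (Fin n))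
    (hf : ContDiff ℝ 1 f)
    (hf' : ∀ y, HasGradientAt f (f' y) y)
    (hL : 0 < L)
    (hLip : LipschitzWith (Real.toNNReal L) f')
    (hσ : 0 < σ) (hω : 0 < ω) (hωσ : ω ≤ 1 / σ)
    (hg : g ≠ 0)
    (herr : ‖g - f' x‖ ≤ ω * ‖g‖)
    (hs : s = -(1 / σ) • g) :
    |f (x + s) - (f x + ⟪f' x, s⟫)| ≤ L / 2 * ‖s‖ ^ 2 ∧
      |(f x - f (x + s)) / ((1 / σ) * ‖g‖ ^ 2) - 1| ≤ (L / 2 + 1) / σ :=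
  stmt_0_general f f' L σ ω x g s hf' hL hLip hσ hωσ hg herr hs
end

section
/- In the ARIG algorithm, if f has L-Lipschitz gradient and the gradient error thresholds satisfy ω_g^k ≤ 1/σ_k, then the regularization parameters satisfy σ_k ≤ max(σ₀, γ₃(L/2 + 1)/(1 − η₂)) for all k ≥ 0. -/
/-!
With step `1 / σ` and relative gradient error at most `1 / σ`, the descent lemma gives
`ρ ≥ 1 - (L / 2 + 1) / σ`. Hence once `σ_k ≥ (L / 2 + 1) / (1 - η₂)` the iteration is very
successful and `σ` does not increase, while in every case `σ_{k+1} ≤ γ₃ σ_k`.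
-/

open scoped NNReal RealInnerProductSpace

section Descent

variable {F : Type*} [NormedAddCommGroup F] [InnerProductSpace ℝ F] [CompleteSpace F]
  {f : F → ℝ} {f' : F → F} {K : ℝ≥0}

/-- The descent lemma: `t ↦ f (x + t • v) - t ⟪f' x, v⟫ - K t² ‖v‖² / 2` is antitone on `[0, 1]`,
since its derivative `⟪f' (x + t • v) - f' x, v⟫ - K t ‖v‖²` is nonpositive there. -/
theorem LipschitzWith.apply_add_le_of_hasGradientAt (hLip : LipschitzWith K f')
    (hf : ∀ y, HasGradientAt f (f' y) y) (x v : F) :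
    f (x + v) ≤ f x + ⟪f' x, v⟫ + K / 2 * ‖v‖ ^ 2 := by
  set φ : ℝ → ℝ := fun t => f (x + t • v) - t * ⟪f' x, v⟫ - K / 2 * t ^ 2 * ‖v‖ ^ 2
  have hφ : ∀ t, HasDerivAt φ (⟪f' (x + t • v) - f' x, v⟫ - K * t * ‖v‖ ^ 2) t := by
    intro t
    have hline : HasDerivAt (fun t : ℝ => x + t • v) v t := by
      simpa using ((hasDerivAt_id t).smul_const v).const_add x
    have hcomp : HasDerivAt (fun t : ℝ => f (x + t • v)) ⟪f' (x + t • v), v⟫ t :=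
      ((hf (x + t • v)).hasFDerivAt.comp_hasDerivAt t hline :)
    have hsq := ((hasDerivAt_pow 2 t).const_mul (K / 2 : ℝ)).mul_const (‖v‖ ^ 2)
    refine ((hcomp.sub ((hasDerivAt_id t).mul_const ⟪f' x, v⟫)).sub hsq).congr_deriv ?_
    rw [inner_sub_left]
    simp only [Nat.cast_ofNat, one_mul]
    ring
  have hanti : AntitoneOn φ (Set.Icc 0 1) := by
    refine antitoneOn_of_deriv_nonpos (convex_Icc 0 1)
      (fun t _ => (hφ t).continuousAt.continuousWithinAt)
      (fun t _ => (hφ t).differentiableAt.differentiableWithinAt) fun t ht => ?_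
    rw [interior_Icc] at ht
    have hdist : ‖f' (x + t • v) - f' x‖ ≤ K * (t * ‖v‖) := by
      simpa [norm_smul, abs_of_pos ht.1] using hLip.norm_sub_le (x + t • v) x
    rw [(hφ t).deriv]
    nlinarith [real_inner_le_norm (f' (x + t • v) - f' x) v, norm_nonneg v]
  have h01 := hanti (Set.left_mem_Icc.2 zero_le_one) (Set.right_mem_Icc.2 zero_le_one) zero_le_one
  simp only [φ, zero_smul, add_zero, zero_mul, sub_zero, one_smul, one_mul, one_pow] at h01
  ring_nf at h01 ⊢
  linarith

end Descent

section InexactGradient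

variable {F : Type*} [NormedAddCommGroup F] [InnerProductSpace ℝ F]

theorem one_sub_mul_norm_sq_le_inner_of_norm_sub_le {a g : F} {ε : ℝ}
    (h : ‖g - a‖ ≤ ε * ‖g‖) : (1 - ε) * ‖g‖ ^ 2 ≤ ⟪a, g⟫ := by
  have hsplit : ⟪a, g⟫ = ‖g‖ ^ 2 - ⟪g - a, g⟫ := by
    rw [inner_sub_left, real_inner_self_eq_norm_sq]
    ring
  nlinarith [real_inner_le_norm (g - a) g, norm_nonneg g]

variable [CompleteSpace F] {f : F → ℝ} {f' : F → F} {K : ℝ≥0}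

theorem LipschitzWith.one_sub_mul_le_decrease_ratio (hLip : LipschitzWith K f')
    (hf : ∀ y, HasGradientAt f (f' y) y) {x g : F} (hg : g ≠ 0) {α : ℝ} (hα : 0 < α)
    (herr : ‖g - f' x‖ ≤ α * ‖g‖) :
    1 - α * (K / 2 + 1) ≤ (f x - f (x + (-α) • g)) / (α * ‖g‖ ^ 2) := by
  have hdescent := hLip.apply_add_le_of_hasGradientAt hf x ((-α) • g)
  have hinner := one_sub_mul_norm_sq_le_inner_of_norm_sub_le herr
  rw [real_inner_smul_right, norm_smul, Real.norm_eq_abs, abs_neg, abs_of_pos hα] at hdescent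
  have hg2 : 0 < ‖g‖ ^ 2 := by positivity
  rw [le_div_iff₀ (by positivity)]
  nlinarith [mul_le_mul_of_nonneg_left hinner hα.le]

end InexactGradient

theorem le_max_of_succ_le_mul_of_succ_le_self {σ : ℕ → ℝ} {γ T : ℝ} (hγ : 0 ≤ γ)
    (hgrow : ∀ k, σ (k + 1) ≤ γ * σ k) (hdec : ∀ k, T ≤ σ k → σ (k + 1) ≤ σ k) :
    ∀ k, σ k ≤ max (σ 0) (γ * T) := by
  intro k
  induction k with
  | zero => exact le_max_left _ _
  | succ k ih =>
    rcases le_or_gt T (σ k) with hT | hT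
    · exact (hdec k hT).trans ih
    · exact (hgrow k).trans
        ((mul_le_mul_of_nonneg_left hT.le hγ).trans (le_max_right _ _))

theorem arig_update_le_mul {σ σ' ρ η₁ η₂ γ₂ γ₃ : ℝ} (hσ : 0 ≤ σ) (hγ2 : 1 < γ₂)
    (hγ23 : γ₂ < γ₃) (hsucc : η₂ ≤ ρ → σ' ≤ σ) (hmid : η₁ ≤ ρ → ρ < η₂ → σ' ≤ γ₂ * σ)
    (hfail : ρ < η₁ → σ' ≤ γ₃ * σ) : σ' ≤ γ₃ * σ := by
  rcases lt_or_ge ρ η₁ with h₁ | h₁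
  · exact hfail h₁
  rcases lt_or_ge ρ η₂ with h₂ | h₂
  · exact (hmid h₁ h₂).trans (by nlinarith)
  · exact (hsucc h₂).trans (by nlinarith)

theorem stmt_1_general {n : ℕ} (f : EuclideanSpace ℝ (Fin n) → ℝ)
    (f' : EuclideanSpace ℝ (Fin n) → EuclideanSpace ℝ (Fin n))
    (L σmin η₁ η₂ γ₁ γ₂ γ₃ : ℝ)
    (x g s : ℕ → EuclideanSpace ℝ (Fin n)) (σ ω ρ : ℕ → ℝ)
    (hf' : ∀ y, HasGradientAt f (f' y) y)
    (hL : 0 < L) (hLip : LipschitzWith (Real.toNNReal L) f')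
    (hη2 : η₂ < 1)
    (hγ2 : 1 < γ₂) (hγ23 : γ₂ < γ₃)
    (hg : ∀ k, g k ≠ 0)
    (hω : ∀ k, 0 < ω k) (hωσ : ∀ k, ω k ≤ 1 / σ k)
    (herr : ∀ k, ‖g k - f' (x k)‖ ≤ ω k * ‖g k‖)
    (hs : ∀ k, s k = -(1 / σ k) • g k)
    (hρ : ∀ k, ρ k = (f (x k) - f (x k + s k)) / ((1 / σ k) * ‖g k‖ ^ 2))
    (hupd : ∀ k,
      (η₂ ≤ ρ k → max σmin (γ₁ * σ k) ≤ σ (k + 1) ∧ σ (k + 1) ≤ σ k) ∧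
      (η₁ ≤ ρ k → ρ k < η₂ → σ k ≤ σ (k + 1) ∧ σ (k + 1) ≤ γ₂ * σ k) ∧
      (ρ k < η₁ → γ₂ * σ k ≤ σ (k + 1) ∧ σ (k + 1) ≤ γ₃ * σ k)) :
    ∀ k, σ k ≤ max (σ 0) (γ₃ * (L / 2 + 1) / (1 - η₂)) := by
  have hσ : ∀ k, 0 < σ k := fun k => one_div_pos.mp ((hω k).trans_le (hωσ k))
  rw [← Real.coe_toNNReal L hL.le]
  have hsuccessful : ∀ k, (L.toNNReal / 2 + 1) / (1 - η₂) ≤ σ k → η₂ ≤ ρ k := by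
    intro k hk
    have hstep : 1 / σ k * (L.toNNReal / 2 + 1) ≤ 1 - η₂ := by
      rw [div_le_iff₀ (by linarith)] at hk
      rw [div_mul_eq_mul_div, one_mul, div_le_iff₀ (hσ k)]
      linarith
    have herr' : ‖g k - f' (x k)‖ ≤ 1 / σ k * ‖g k‖ := (herr k).trans (by gcongr; exact hωσ k)
    calc η₂ ≤ 1 - 1 / σ k * (L.toNNReal / 2 + 1) := by linarith
      _ ≤ ρ k := by
        rw [hρ k, hs k]
        exact hLip.one_sub_mul_le_decrease_ratio hf' (hg k) (one_div_pos.mpr (hσ k)) herr'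
  rw [mul_div_assoc]
  refine le_max_of_succ_le_mul_of_succ_le_self (by linarith) (fun k => ?_)
    fun k hk => ((hupd k).1 (hsuccessful k hk)).2
  obtain ⟨hsucc, hmid, hfail⟩ := hupd k
  exact arig_update_le_mul (hσ k).le hγ2 hγ23 (fun h => (hsucc h).2) (fun h h' => (hmid h h').2)
    fun h => (hfail h).2

theorem stmt_1 {n : ℕ} (f : EuclideanSpace ℝ (Fin n) → ℝ)
    (f' : EuclideanSpace ℝ (Fin n) → EuclideanSpace ℝ (Fin n))
    (L σmin η₁ η₂ γ₁ γ₂ γ₃ : ℝ)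
    (x g s : ℕ → EuclideanSpace ℝ (Fin n)) (σ ω ρ : ℕ → ℝ)
    (hf : ContDiff ℝ 1 f)
    (hf' : ∀ y, HasGradientAt f (f' y) y)
    (hL : 0 < L) (hLip : LipschitzWith (Real.toNNReal L) f')
    (hσmin : 0 < σmin) (hσ0 : σmin ≤ σ 0)
    (hη1 : 0 < η₁) (hη12 : η₁ ≤ η₂) (hη2 : η₂ < 1)
    (hγ1 : 0 < γ₁) (hγ1' : γ₁ < 1) (hγ2 : 1 < γ₂) (hγ23 : γ₂ < γ₃)
    (hg : ∀ k, g k ≠ 0)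
    (hω : ∀ k, 0 < ω k) (hωσ : ∀ k, ω k ≤ 1 / σ k)
    (herr : ∀ k, ‖g k - f' (x k)‖ ≤ ω k * ‖g k‖)
    (hs : ∀ k, s k = -(1 / σ k) • g k)
    (hρ : ∀ k, ρ k = (f (x k) - f (x k + s k)) / ((1 / σ k) * ‖g k‖ ^ 2))
    (hx : ∀ k, x (k + 1) = if η₁ ≤ ρ k then x k + s k else x k)
    (hupd : ∀ k,
      (η₂ ≤ ρ k → max σmin (γ₁ * σ k) ≤ σ (k + 1) ∧ σ (k + 1) ≤ σ k) ∧
      (η₁ ≤ ρ k → ρ k < η₂ → σ k ≤ σ (k + 1) ∧ σ (k + 1) ≤ γ₂ * σ k) ∧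
      (ρ k < η₁ → γ₂ * σ k ≤ σ (k + 1) ∧ σ (k + 1) ≤ γ₃ * σ k)) :
    ∀ k, σ k ≤ max (σ 0) (γ₃ * (L / 2 + 1) / (1 - η₂)) :=
  stmt_1_general f f' L σmin η₁ η₂ γ₁ γ₂ γ₃ x g s σ ω ρ hf' hL hLip hη2 hγ2 hγ23 hg hω hωσ herr hs
    hρ hupd
end

section
/- Let s, y ∈ ℝⁿ satisfy sᵀy ≥ γ‖s‖² with γ > 0 and ‖y‖ ≤ L_y‖s‖ with L_y > 0, let μ > 0, ρ = 1/(sᵀy), V = I − ρ s yᵀ, and A = μVVᵀ + ρ s sᵀ. Then A is symmetric positive definite and λ_min(A) ≥ min(1/L_y, μ/(1 + (μ/γ)L_y²)) > 0. -/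
/-!
Write `u = Vᵀ x` and `α = sᵀ x`. Then `xᵀ A x = μ ‖u‖² + ρ α²` and `x = u + ρ α y`, so the triangle
inequality and Cauchy–Schwarz in `ℝ²` give `‖x‖² ≤ xᵀ A x · (1/μ + ρ ‖y‖²)`. The curvature and
Lipschitz conditions bound `ρ ‖y‖²` by `L_y² / γ`, so every Rayleigh quotient of `A`, hence every
eigenvalue, is at least `μ / (1 + (μ / γ) L_y²)`.
-/

open Matrix
open scoped Matrix

lemma norm_add_smul_sq_le {E : Type*} [SeminormedAddCommGroup E] [NormedSpace ℝ E]
    (u y : E) (a : ℝ) {μ ρ : ℝ} (hμ : 0 < μ) (hρ : 0 ≤ ρ) :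
    ‖u + (ρ * a) • y‖ ^ 2 ≤ (μ * ‖u‖ ^ 2 + ρ * a ^ 2) * (μ⁻¹ + ρ * ‖y‖ ^ 2) := by
  have htri : ‖u + (ρ * a) • y‖ ≤ ‖u‖ + ρ * |a| * ‖y‖ := by
    simpa [norm_smul, abs_of_nonneg hρ, mul_assoc] using norm_add_le u ((ρ * a) • y)
  -- Cauchy–Schwarz in ℝ² for (√μ ‖u‖, √ρ |a|) and (1/√μ, √ρ ‖y‖); the defect is ρ (μ ‖u‖ ‖y‖ - |a|)² / μ.
  have hCS : (‖u‖ + ρ * |a| * ‖y‖) ^ 2 ≤ (μ * ‖u‖ ^ 2 + ρ * a ^ 2) * (μ⁻¹ + ρ * ‖y‖ ^ 2) := by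
    have hdefect : 0 ≤ ρ * μ⁻¹ * (μ * ‖u‖ * ‖y‖ - |a|) ^ 2 := by positivity
    have hμμ : μ * μ⁻¹ = 1 := mul_inv_cancel₀ hμ.ne'
    rw [← sq_abs a]
    linear_combination hdefect - (‖u‖ ^ 2 - ρ * μ * ‖u‖ ^ 2 * ‖y‖ ^ 2 + 2 * ρ * |a| * ‖u‖ * ‖y‖) * hμμ
  exact (pow_le_pow_left₀ (norm_nonneg _) htri 2).trans hCS

section

variable {ι : Type*} [Fintype ι]

lemma dotProduct_self_eq_norm_toLp_sq (v : ι → ℝ) : v ⬝ᵥ v = ‖WithLp.toLp 2 v‖ ^ 2 := by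
  rw [← real_inner_self_eq_norm_sq, EuclideanSpace.inner_eq_star_dotProduct]
  rfl

lemma dotProduct_self_nonneg (v : ι → ℝ) : 0 ≤ v ⬝ᵥ v := by
  rw [dotProduct_self_eq_norm_toLp_sq]
  positivity

lemma one_div_dotProduct_mul_dotProduct_le (s y : ι → ℝ) {γ Ly : ℝ}
    (hγ : 0 < γ) (hsy : s ⬝ᵥ y ≥ γ * (s ⬝ᵥ s))
    (hy : Real.sqrt (y ⬝ᵥ y) ≤ Ly * Real.sqrt (s ⬝ᵥ s)) :
    1 / (s ⬝ᵥ y) * (y ⬝ᵥ y) ≤ Ly ^ 2 / γ := by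
  have hy2 : y ⬝ᵥ y ≤ Ly ^ 2 * (s ⬝ᵥ s) := by
    have := pow_le_pow_left₀ (Real.sqrt_nonneg _) hy 2
    rwa [mul_pow, Real.sq_sqrt (dotProduct_self_nonneg y),
      Real.sq_sqrt (dotProduct_self_nonneg s)] at this
  rcases ((mul_nonneg hγ.le (dotProduct_self_nonneg s)).trans hsy).eq_or_lt with hsy0 | hsy0
  · rw [← hsy0]
    simp only [div_zero, zero_mul]
    positivity
  · rw [div_mul_eq_mul_div, one_mul, div_le_div_iff₀ hsy0 hγ]
    nlinarith

lemma dotProduct_add_smul_self_le (u y : ι → ℝ) (a : ℝ) {μ ρ : ℝ} (hμ : 0 < μ) (hρ : 0 ≤ ρ) :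
    (u + (ρ * a) • y) ⬝ᵥ (u + (ρ * a) • y) ≤
      (μ * (u ⬝ᵥ u) + ρ * a ^ 2) * (μ⁻¹ + ρ * (y ⬝ᵥ y)) := by
  simpa only [dotProduct_self_eq_norm_toLp_sq, WithLp.toLp_add, WithLp.toLp_smul]
    using norm_add_smul_sq_le (WithLp.toLp 2 u) (WithLp.toLp 2 y) a hμ hρ

lemma dotProduct_smul_mul_transpose_add_smul_vecMulVec_mulVec (V : Matrix ι ι ℝ)
    (μ ρ : ℝ) (s x : ι → ℝ) :
    x ⬝ᵥ (μ • (V * Vᵀ) + ρ • vecMulVec s s) *ᵥ x =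
      μ * (Vᵀ *ᵥ x ⬝ᵥ Vᵀ *ᵥ x) + ρ * (s ⬝ᵥ x) ^ 2 := by
  rw [add_mulVec, smul_mulVec, smul_mulVec, dotProduct_add, dotProduct_smul, dotProduct_smul,
    ← mulVec_mulVec, dotProduct_mulVec, ← mulVec_transpose, vecMulVec_mulVec, dotProduct_smul]
  simp [dotProduct_comm x s, sq]

variable [DecidableEq ι]

lemma transpose_one_sub_smul_vecMulVec_mulVec (ρ : ℝ) (s y x : ι → ℝ) :
    (1 - ρ • vecMulVec s y)ᵀ *ᵥ x = x - (ρ * (s ⬝ᵥ x)) • y := by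
  rw [transpose_sub, transpose_smul, transpose_one, transpose_vecMulVec, sub_mulVec, one_mulVec,
    smul_mulVec, vecMulVec_mulVec]
  simp [smul_smul]

lemma inv_mul_dotProduct_self_le_dotProduct_mulVec_of_bfgs {μ ρ : ℝ} (hμ : 0 < μ) (hρ : 0 ≤ ρ)
    (s y x : ι → ℝ) :
    (μ⁻¹ + ρ * (y ⬝ᵥ y))⁻¹ * (x ⬝ᵥ x) ≤
      x ⬝ᵥ (μ • ((1 - ρ • vecMulVec s y) * (1 - ρ • vecMulVec s y)ᵀ) + ρ • vecMulVec s s) *ᵥ x := by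
  have hx : x = (1 - ρ • vecMulVec s y)ᵀ *ᵥ x + (ρ * (s ⬝ᵥ x)) • y := by
    rw [transpose_one_sub_smul_vecMulVec_mulVec, sub_add_cancel]
  rw [inv_mul_le_iff₀ (by have := dotProduct_self_nonneg y; positivity),
    dotProduct_smul_mul_transpose_add_smul_vecMulVec_mulVec, mul_comm]
  conv_lhs => rw [hx]
  exact dotProduct_add_smul_self_le _ y _ hμ hρ

lemma Matrix.IsHermitian.le_eigenvalues {A : Matrix ι ι ℝ} (hA : A.IsHermitian) {c : ℝ}
    (h : ∀ x, c * (x ⬝ᵥ x) ≤ x ⬝ᵥ A *ᵥ x) (i : ι) : c ≤ hA.eigenvalues i := by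
  set v := hA.eigenvectorBasis i
  have hv : ⇑v ⬝ᵥ ⇑v = 1 := by
    rw [dotProduct_self_eq_norm_toLp_sq, WithLp.toLp_ofLp, hA.eigenvectorBasis.orthonormal.1 i,
      one_pow]
  simpa [hA.eigenvalues_eq i, hv, dotProduct_comm] using h v

end

theorem stmt_8_general {n : ℕ} (s y : Fin n → ℝ) (γ Ly μ ρ : ℝ)
    (hγ : 0 < γ) (hLy : 0 < Ly) (hμ : 0 < μ)
    (hsy : s ⬝ᵥ y ≥ γ * (s ⬝ᵥ s))
    (hy : Real.sqrt (y ⬝ᵥ y) ≤ Ly * Real.sqrt (s ⬝ᵥ s))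
    (hρ : ρ = 1 / (s ⬝ᵥ y))
    (V A : Matrix (Fin n) (Fin n) ℝ)
    (hV : V = 1 - ρ • vecMulVec s y)
    (hA : A = μ • (V * Vᵀ) + ρ • vecMulVec s s)
    (hAh : A.IsHermitian) :
    A.PosDef ∧ 0 < min (1 / Ly) (μ / (1 + (μ / γ) * Ly ^ 2)) ∧
      ∀ i, min (1 / Ly) (μ / (1 + (μ / γ) * Ly ^ 2)) ≤ hAh.eigenvalues i := by
  have hρ0 : 0 ≤ ρ := hρ ▸ one_div_nonneg.mpr
    ((mul_nonneg hγ.le (dotProduct_self_nonneg s)).trans hsy)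
  have hρy : ρ * (y ⬝ᵥ y) ≤ Ly ^ 2 / γ := hρ ▸ one_div_dotProduct_mul_dotProduct_le s y hγ hsy hy
  have hc : 0 < μ / (1 + (μ / γ) * Ly ^ 2) := by positivity
  have hquad : ∀ x, μ / (1 + (μ / γ) * Ly ^ 2) * (x ⬝ᵥ x) ≤ x ⬝ᵥ A *ᵥ x := by
    intro x
    have hyy := dotProduct_self_nonneg y
    have hxx := dotProduct_self_nonneg x
    calc μ / (1 + (μ / γ) * Ly ^ 2) * (x ⬝ᵥ x) = (μ⁻¹ + Ly ^ 2 / γ)⁻¹ * (x ⬝ᵥ x) := by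
          field_simp
      _ ≤ (μ⁻¹ + ρ * (y ⬝ᵥ y))⁻¹ * (x ⬝ᵥ x) := by gcongr
      _ ≤ x ⬝ᵥ A *ᵥ x := hA ▸ hV ▸ inv_mul_dotProduct_self_le_dotProduct_mulVec_of_bfgs hμ hρ0 s y x
  have heig := hAh.le_eigenvalues hquad
  exact ⟨hAh.posDef_iff_eigenvalues_pos.mpr fun i => hc.trans_le (heig i),
    lt_min (by positivity) hc, fun i => (min_le_right _ _).trans (heig i)⟩

theorem stmt_8 {n : ℕ} (s y : Fin n → ℝ) (γ Ly μ ρ : ℝ)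
    (hγ : 0 < γ) (hLy : 0 < Ly) (hμ : 0 < μ) (hs : s ≠ 0)
    (hsy : s ⬝ᵥ y ≥ γ * (s ⬝ᵥ s))
    (hy : Real.sqrt (y ⬝ᵥ y) ≤ Ly * Real.sqrt (s ⬝ᵥ s))
    (hρ : ρ = 1 / (s ⬝ᵥ y))
    (V A : Matrix (Fin n) (Fin n) ℝ)
    (hV : V = 1 - ρ • vecMulVec s y)
    (hA : A = μ • (V * Vᵀ) + ρ • vecMulVec s s)
    (hAh : A.IsHermitian) :
    A.PosDef ∧ 0 < min (1 / Ly) (μ / (1 + (μ / γ) * Ly ^ 2)) ∧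
      ∀ i, min (1 / Ly) (μ / (1 + (μ / γ) * Ly ^ 2)) ≤ hAh.eigenvalues i :=
  stmt_8_general s y γ Ly μ ρ hγ hLy hμ hsy hy hρ V A hV hA hAh
end

section
/- Let s, y ∈ ℝⁿ be linearly independent, μ > 0, ρ = 1/(sᵀy) with sᵀy > 0, V = I − ρ s yᵀ, and A = μVVᵀ + ρ s sᵀ. Then A s = ρ‖s‖²(1 + μρ‖y‖²)s − ρ‖s‖²μ y and A y = s; in particular neither s nor y is an eigenvector of A. -/
open Matrix
open scoped Matrix

lemma vecMulVec_mulVec' {n : ℕ} (a b x : Fin n → ℝ) :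
    (vecMulVec a b).mulVec x = (b ⬝ᵥ x) • a := by
  ext i
  simp [vecMulVec, mulVec, dotProduct, Finset.mul_sum, mul_comm, mul_assoc, mul_left_comm]

theorem stmt_10 {n : ℕ} (s y : Fin n → ℝ) (μ ρ : ℝ)
    (hind : LinearIndependent ℝ ![s, y]) (hμ : 0 < μ)
    (hsy : 0 < s ⬝ᵥ y) (hρ : ρ = 1 / (s ⬝ᵥ y))
    (V A : Matrix (Fin n) (Fin n) ℝ)
    (hV : V = 1 - ρ • vecMulVec s y)
    (hA : A = μ • (V * Vᵀ) + ρ • vecMulVec s s) :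
    A.mulVec s = (ρ * (s ⬝ᵥ s) * (1 + μ * ρ * (y ⬝ᵥ y))) • s - (ρ * (s ⬝ᵥ s) * μ) • y ∧
      A.mulVec y = s ∧
      (¬ ∃ lam : ℝ, A.mulVec s = lam • s) ∧
      (¬ ∃ lam : ℝ, A.mulVec y = lam • y) := by
  have hρsy : ρ * (s ⬝ᵥ y) = 1 := by
    rw [hρ]; field_simp
  have hρpos : 0 < ρ := by rw [hρ]; positivity
  have hs0 : s ≠ 0 := by
    have := hind.ne_zero 0
    simpa using this
  have hy0 : y ≠ 0 := by
    have := hind.ne_zero 1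
    simpa using this
  have hss : 0 < s ⬝ᵥ s := by
    have h0 : (0:ℝ) ≤ s ⬝ᵥ s := Finset.sum_nonneg fun i _ => mul_self_nonneg _
    rcases h0.lt_or_eq with h | h
    · exact h
    · exact absurd ((dotProduct_self_eq_zero).mp h.symm) hs0
  have hVt : Vᵀ = 1 - ρ • vecMulVec y s := by
    rw [hV, transpose_sub, transpose_one, transpose_smul]
    congr 1
    ext i j
    simp [transpose_apply, vecMulVec, mul_comm]
  have hmul : ∀ x : Fin n → ℝ, A.mulVec x =
      μ • (V.mulVec (Vᵀ.mulVec x)) + (ρ * (s ⬝ᵥ x)) • s := by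
    intro x
    rw [hA, add_mulVec, smul_mulVec, smul_mulVec, ← mulVec_mulVec,
      vecMulVec_mulVec', smul_smul]
  have hVts : Vᵀ.mulVec s = s - (ρ * (s ⬝ᵥ s)) • y := by
    rw [hVt, sub_mulVec, smul_mulVec, vecMulVec_mulVec', one_mulVec, smul_smul]
  have hVty : Vᵀ.mulVec y = 0 := by
    rw [hVt, sub_mulVec, smul_mulVec, vecMulVec_mulVec', one_mulVec, smul_smul,
      hρsy, one_smul, sub_self]
  have hAs : A.mulVec s =
      (ρ * (s ⬝ᵥ s) * (1 + μ * ρ * (y ⬝ᵥ y))) • s - (ρ * (s ⬝ᵥ s) * μ) • y := by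
    rw [hmul, hVts, mulVec_sub, hV, sub_mulVec, sub_mulVec, smul_mulVec,
      smul_mulVec, vecMulVec_mulVec', vecMulVec_mulVec', one_mulVec, one_mulVec]
    have hys : y ⬝ᵥ s = s ⬝ᵥ y := dotProduct_comm _ _
    ext i
    simp only [Pi.add_apply, Pi.sub_apply, Pi.smul_apply, smul_eq_mul, dotProduct_smul, hys]
    linear_combination (-(μ * s i)) * hρsy
  have hAy : A.mulVec y = s := by
    rw [hmul, hVty, mulVec_zero, smul_zero, zero_add, hρsy, one_smul]
  refine ⟨hAs, hAy, ?_, ?_⟩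
  · rintro ⟨lam, hlam⟩
    rw [hAs] at hlam
    have key : (ρ * (s ⬝ᵥ s) * (1 + μ * ρ * (y ⬝ᵥ y)) - lam) • s +
        (-(ρ * (s ⬝ᵥ s) * μ)) • y = 0 := by
      rw [sub_smul, neg_smul]
      rw [sub_eq_iff_eq_add] at hlam
      abel_nf
      rw [hlam]
      abel
    have := (LinearIndependent.pair_iff.mp hind _ _ key).2
    have : ρ * (s ⬝ᵥ s) * μ ≠ 0 := by positivity
    simp_all
  · rintro ⟨lam, hlam⟩
    rw [hAy] at hlam
    have key : (1 : ℝ) • s + (-lam) • y = 0 := by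
      rw [one_smul, neg_smul, hlam]; abel
    have := (LinearIndependent.pair_iff.mp hind _ _ key).1
    norm_num at this
end

section
/- Let s, y ∈ ℝⁿ be linearly independent with sᵀy > 0, μ > 0, ρ = 1/(sᵀy), V = I − ρ s yᵀ, A = μVVᵀ + ρ s sᵀ. Then the two eigenvalues of A whose eigenvectors lie in span{s, y} are the roots of p(λ) = λ² − λρ‖s‖²(1 + μρ‖y‖²) + ρ‖s‖²μ, and the remaining n−2 eigenvalues equal μ. -/
open Matrix
open scoped Matrix

lemma vecMulVec_mulVec'_s11 {n : ℕ} (v w u : Fin n → ℝ) :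
    (vecMulVec v w) *ᵥ u = (w ⬝ᵥ u) • v := by
  funext i
  simp [vecMulVec_apply, mulVec, dotProduct, Finset.sum_mul, Finset.mul_sum, mul_comm,
    mul_left_comm, mul_assoc]

lemma vecMulVec_transpose' {n : ℕ} (v w : Fin n → ℝ) :
    (vecMulVec v w)ᵀ = vecMulVec w v := by
  ext i j; simp [vecMulVec_apply, mul_comm]

theorem stmt_11 {n : ℕ} (s y : Fin n → ℝ) (μ ρ : ℝ)
    (hind : LinearIndependent ℝ ![s, y]) (hμ : 0 < μ)
    (hsy : 0 < s ⬝ᵥ y) (hρ : ρ = 1 / (s ⬝ᵥ y))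
    (V A : Matrix (Fin n) (Fin n) ℝ)
    (hV : V = 1 - ρ • vecMulVec s y)
    (hA : A = μ • (V * Vᵀ) + ρ • vecMulVec s s) :
    (∀ u : Fin n → ℝ, u ≠ 0 → u ∈ Submodule.span ℝ ({s, y} : Set (Fin n → ℝ)) →
      ∀ lam : ℝ, A.mulVec u = lam • u →
        lam ^ 2 - lam * (ρ * (s ⬝ᵥ s) * (1 + μ * ρ * (y ⬝ᵥ y))) + ρ * (s ⬝ᵥ s) * μ = 0) ∧
    (∀ u : Fin n → ℝ, u ⬝ᵥ s = 0 → u ⬝ᵥ y = 0 → A.mulVec u = μ • u) := by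
  have hτ : s ⬝ᵥ y ≠ 0 := ne_of_gt hsy
  have hρτ : ρ * (s ⬝ᵥ y) = 1 := by rw [hρ]; field_simp
  have hVT : Vᵀ = 1 - ρ • vecMulVec y s := by
    rw [hV, transpose_sub, transpose_smul, transpose_one, vecMulVec_transpose']
  have hVv : ∀ v : Fin n → ℝ, V *ᵥ v = v - (ρ * (y ⬝ᵥ v)) • s := by
    intro v
    rw [hV, sub_mulVec, one_mulVec, smul_mulVec, vecMulVec_mulVec'_s11, smul_smul]
  have hVTv : ∀ v : Fin n → ℝ, Vᵀ *ᵥ v = v - (ρ * (s ⬝ᵥ v)) • y := by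
    intro v
    rw [hVT, sub_mulVec, one_mulVec, smul_mulVec, vecMulVec_mulVec'_s11, smul_smul]
  have hAv : ∀ v : Fin n → ℝ, A *ᵥ v
      = μ • (v - (ρ * (s ⬝ᵥ v)) • y - (ρ * (y ⬝ᵥ (v - (ρ * (s ⬝ᵥ v)) • y))) • s)
        + (ρ * (s ⬝ᵥ v)) • s := by
    intro v
    rw [hA, add_mulVec, smul_mulVec, smul_mulVec, vecMulVec_mulVec'_s11,
      ← mulVec_mulVec, hVTv, hVv, smul_smul]
  constructor
  · intro u hu0 huspan lam hlam
    rw [Submodule.mem_span_pair] at huspan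
    obtain ⟨a, b, hab⟩ := huspan
    set σ := s ⬝ᵥ s with hσ
    set τ := s ⬝ᵥ y with hτd
    set ω := y ⬝ᵥ y with hω
    have hsu : s ⬝ᵥ u = a * σ + b * τ := by
      rw [← hab]; simp [dotProduct_add, dotProduct_smul, smul_eq_mul, hσ, hτd]
    have hyu : y ⬝ᵥ u = a * τ + b * ω := by
      rw [← hab]
      simp [dotProduct_add, dotProduct_smul, smul_eq_mul, hω, dotProduct_comm y s, hτd]
    have hyy : y ⬝ᵥ (u - (ρ * (a * σ + b * τ)) • y)
        = a * τ + b * ω - ρ * (a * σ + b * τ) * ω := by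
      rw [dotProduct_sub, dotProduct_smul, hyu, smul_eq_mul]
    have key : A *ᵥ u =
        (μ * a - μ * ρ * (a * τ + b * ω - ρ * (a * σ + b * τ) * ω) + ρ * (a * σ + b * τ)) • s
        + (μ * b - μ * ρ * (a * σ + b * τ)) • y := by
      rw [hAv u, hsu, hyy, ← hab]
      module
    have key2 : ((μ * a - μ * ρ * (a * τ + b * ω - ρ * (a * σ + b * τ) * ω)
          + ρ * (a * σ + b * τ)) - lam * a) • s
        + ((μ * b - μ * ρ * (a * σ + b * τ)) - lam * b) • y = 0 := by
      have h := key.symm.trans hlam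
      rw [← hab] at h
      linear_combination (norm := module) h
    obtain ⟨h1, h2⟩ := LinearIndependent.pair_iff.mp hind _ _ key2
    by_cases ha : a = 0
    · exfalso
      subst ha
      have hb : b = 0 := by
        linear_combination h1 + (-(μ * ρ * ω * b + b)) * hρτ
      apply hu0; rw [← hab, hb]; simp
    · have hG : (lam ^ 2 - lam * (ρ * σ * (1 + μ * ρ * ω)) + ρ * σ * μ) * a = 0 := by
        linear_combination (-lam) * h1 - h2
          + (lam * μ * ρ * ω * b + lam * b - lam * μ * a - μ * b) * hρτ
      rcases mul_eq_zero.mp hG with h | h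
      · linarith
      · exact absurd h ha
  · intro u hus huy
    have hsu : s ⬝ᵥ u = 0 := by rw [dotProduct_comm]; exact hus
    have hyu : y ⬝ᵥ u = 0 := by rw [dotProduct_comm]; exact huy
    rw [hAv u, hsu]
    simp [dotProduct_sub, dotProduct_smul, hyu]
end
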